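/- Let F : 𝒜 → ℬ be a triangle functor between triangulated categories. Then the following are equivalent: (1) F satisfies condition (SM); (2) F is objective and the Verdier quotient functor V_F : 𝒜 → 𝒜/Ker F is full; (3) there is an equivalence Φ : 𝒜/ker(F) → 𝒜/Ker(F) such that V_F = Φ ∘ π_F, where π_F : 𝒜 → 𝒜/ker(F) is the projection onto the factor category of 𝒜 by the ideal ker(F) of morphisms annihilated by F; (4) F = F₂ ∘ F₁ where F₁ is a full and dense triangle functor and F₂ is a faithful triangle functor. -/

import Mathlib

/-!
Write `Q : 𝒜 ⥤ 𝒜/ker(F)` for the projection. Each of (1)–(3) amounts to `Q` being a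
localization of `𝒜` at the morphisms inverted by `F`, i.e. to `𝒜/ker(F)` being the Verdier
quotient. This requires two things. First, `Q` must invert every `s` with `F s` invertible:
that is condition (I), `s` has an inverse modulo `ker F`. Second, `Q` may identify no more
morphisms than the localization does; by the calculus of fractions a morphism dies in the
localization iff it is killed by some `s` inverted by `F`, iff it factors through `Ker F`,
so this is objectivity.

Objectivity together with (I) is equivalent to (SM). If `F u` is a split monomorphism, the
third morphism `w` of the triangle on `u` is killed by `F`, so it factors as
`Z ⟶ K ⟶ X⟦1⟧` with `K ∈ Ker F`. The triangle on `K ⟶ X⟦1⟧` provides a morphism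
`j : X ⟶ M` inverted by `F` through which `u` factors, and an inverse of `j` modulo `ker F`
gives the required `u'`. Conversely, (SM) applied to the second morphism of the triangle
on a morphism killed by `F` yields objectivity.

For (4) ⇒ (1), faithfulness of `F₂` forces `F₁ w = 0`, so `F₁ u` is a split monomorphism
whose retraction lifts along the full functor `F₁`. For (1) ⇒ (4) take `F₁ = Q`, with the
triangulation that `𝒜/ker(F)` carries as a localization, and `F₂` induced by `F`.
-/

universe v u v' u' v'' u''

open CategoryTheory Limits Pretriangulated

section CatPreamble

variable {𝒜 : Type u} [Category.{v} 𝒜] {ℬ : Type u'} [Category.{v'} ℬ]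

/-- An additive functor is objective if every morphism killed by `F` factors through an
object killed by `F`. -/
def ObjectiveFunctor [Limits.HasZeroMorphisms ℬ] (F : 𝒜 ⥤ ℬ) : Prop :=
  ∀ ⦃X Y : 𝒜⦄ (f : X ⟶ Y), F.map f = 0 →
    ∃ (K : 𝒜) (g : X ⟶ K) (h : K ⟶ Y), Limits.IsZero (F.obj K) ∧ g ≫ h = f

/-- Condition (WSM). -/
def CondWSM (F : 𝒜 ⥤ ℬ) : Prop :=
  ∀ ⦃X Y : 𝒜⦄ (u : X ⟶ Y), IsSplitMono (F.map u) →
    ∃ (X' : 𝒜) (u' : Y ⟶ X'), IsIso (F.map (u ≫ u'))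

/-- Condition (I). -/
def CondI (F : 𝒜 ⥤ ℬ) : Prop :=
  ∀ ⦃X Y : 𝒜⦄ (u : X ⟶ Y) (_ : IsIso (F.map u)),
    ∃ u' : Y ⟶ X, F.map u' = CategoryTheory.inv (F.map u)

/-- Condition (SM). -/
def CondSM (F : 𝒜 ⥤ ℬ) : Prop :=
  ∀ ⦃X Y : 𝒜⦄ (u : X ⟶ Y), IsSplitMono (F.map u) →
    ∃ u' : Y ⟶ X, F.map (u ≫ u') = 𝟙 (F.obj X)

variable (𝒜) in
/-- Iterated composition of an endomorphism. -/
def compPow {X : 𝒜} (f : X ⟶ X) : ℕ → (X ⟶ X)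
  | 0 => 𝟙 X
  | n + 1 => f ≫ compPow f n

variable (𝒜) in
/-- A Fitting category: every endomorphism decomposes as an automorphism plus a
nilpotent endomorphism along a direct sum decomposition of the object. -/
def IsFittingCategory [Preadditive 𝒜] : Prop :=
  ∀ (X : 𝒜) (a : X ⟶ X),
    ∃ (X' X'' : 𝒜) (i' : X' ⟶ X) (p' : X ⟶ X') (i'' : X'' ⟶ X) (p'' : X ⟶ X''),
      i' ≫ p' = 𝟙 X' ∧ i'' ≫ p'' = 𝟙 X'' ∧ i' ≫ p'' = 0 ∧ i'' ≫ p' = 0 ∧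
      p' ≫ i' + p'' ≫ i'' = 𝟙 X ∧
      i' ≫ a ≫ p'' = 0 ∧ i'' ≫ a ≫ p' = 0 ∧
      IsIso (i' ≫ a ≫ p') ∧ ∃ n : ℕ, compPow 𝒜 (i'' ≫ a ≫ p'') (n + 1) = 0

section Triangulated

variable [HasZeroObject 𝒜] [Preadditive 𝒜] [HasShift 𝒜 ℤ]
  [∀ n : ℤ, (shiftFunctor 𝒜 n).Additive] [Pretriangulated 𝒜]
  [HasZeroObject ℬ] [Preadditive ℬ] [HasShift ℬ ℤ]
  [∀ n : ℤ, (shiftFunctor ℬ n).Additive] [Pretriangulated ℬ]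

/-- The class of morphisms of `𝒜` whose cone is killed by `F`; the Verdier quotient of
`𝒜` by `Ker F` is the localization of `𝒜` at this class. -/
def kerW (F : 𝒜 ⥤ ℬ) : MorphismProperty 𝒜 := fun X Y f =>
  ∃ (Z : 𝒜) (g : Y ⟶ Z) (h : Z ⟶ X⟦(1 : ℤ)⟧),
    (Triangle.mk f g h ∈ distTriang 𝒜) ∧ IsZero (F.obj Z)

end Triangulated

end CatPreamble

/-- The ideal `ker(F)` of morphisms killed by `F`, as a `HomRel`: two morphisms are
identified iff their images under `F` agree.  The corresponding quotient category is
the factor category `𝒜/ker(F)`. -/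
def kerHomRel {𝒜 : Type u} [Category.{v} 𝒜] {ℬ : Type u'} [Category.{v'} ℬ]
    (F : 𝒜 ⥤ ℬ) : HomRel 𝒜 :=
  fun {X Y} (f g : X ⟶ Y) => F.map f = F.map g

lemma CondSM.condI {𝒜 ℬ : Type*} [Category 𝒜] [Category ℬ] {F : 𝒜 ⥤ ℬ} (h : CondSM F) :
    CondI F := by
  intro X Y u hu
  obtain ⟨u', hu'⟩ := h u inferInstance
  rw [F.map_comp] at hu'
  exact ⟨u', IsIso.eq_inv_of_hom_inv_id hu'⟩

section FactorCategory

variable {𝒜 ℬ : Type*} [Category 𝒜] [Category ℬ] (F : 𝒜 ⥤ ℬ)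

instance : Congruence (kerHomRel F) := F.congruence_homRel

instance [HasShift 𝒜 ℤ] [HasShift ℬ ℤ] [F.CommShift ℤ] :
    (kerHomRel F).IsCompatibleWithShift ℤ where
  condition a X Y f g (h : F.map f = F.map g) := by
    have hf := NatIso.naturality_2 (F.commShiftIso a) f
    have hg := NatIso.naturality_2 (F.commShiftIso a) g
    dsimp at hf hg
    change F.map _ = F.map _
    rw [← hf, ← hg, h]

abbrev kerQuotientLift : Quotient (kerHomRel F) ⥤ ℬ :=
  CategoryTheory.Quotient.lift _ F fun _ _ _ _ h => h

instance : (kerQuotientLift F).Faithful :=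
  inferInstanceAs (CategoryTheory.Quotient.lift F.homRel F _).Faithful

noncomputable instance [HasShift 𝒜 ℤ] [HasShift ℬ ℤ] [F.CommShift ℤ] :
    (kerQuotientLift F).CommShift ℤ :=
  CategoryTheory.Quotient.liftCommShift F _ ℤ _

variable [Preadditive 𝒜] [Preadditive ℬ] [F.Additive]

instance : Preadditive (Quotient (kerHomRel F)) :=
  Quotient.preadditive _ fun _ _ f₁ f₂ g₁ g₂ (h₁ : F.map f₁ = F.map f₂)
    (h₂ : F.map g₁ = F.map g₂) => show F.map _ = F.map _ by rw [F.map_add, F.map_add, h₁, h₂]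

instance : (Quotient.functor (kerHomRel F)).Additive :=
  Quotient.functor_additive _ _

instance : (kerQuotientLift F).Additive :=
  have := Functor.additive_of_iso (CategoryTheory.Quotient.lift.isLift (kerHomRel F) F _).symm
  Functor.additive_of_full_essSurj_comp (Quotient.functor _) _

instance [HasZeroObject 𝒜] : HasZeroObject (Quotient (kerHomRel F)) :=
  (Quotient.functor _).hasZeroObject_of_additive

instance [HasShift 𝒜 ℤ] [HasShift ℬ ℤ] [F.CommShift ℤ] [∀ n : ℤ, (shiftFunctor 𝒜 n).Additive]
    (n : ℤ) : (shiftFunctor (Quotient (kerHomRel F)) n).Additive :=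
  have := Functor.additive_of_iso ((Quotient.functor (kerHomRel F)).commShiftIso n)
  Functor.additive_of_full_essSurj_comp (Quotient.functor _) _

end FactorCategory

section Triangulated

variable {𝒜 : Type u} [Category.{v} 𝒜] {ℬ : Type u'} [Category.{v'} ℬ]
  [HasZeroObject 𝒜] [Preadditive 𝒜] [HasShift 𝒜 ℤ]
  [∀ n : ℤ, (shiftFunctor 𝒜 n).Additive] [Pretriangulated 𝒜]
  [HasZeroObject ℬ] [Preadditive ℬ] [HasShift ℬ ℤ]
  [∀ n : ℤ, (shiftFunctor ℬ n).Additive] [Pretriangulated ℬ]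
  (F : 𝒜 ⥤ ℬ) [F.CommShift ℤ] [F.IsTriangulated]

lemma CategoryTheory.Functor.isSplitMono_map_mor₁_iff {T : Triangle 𝒜}
    (hT : T ∈ distTriang 𝒜) : IsSplitMono (F.map T.mor₁) ↔ F.map T.mor₃ = 0 := by
  have hFT := F.map_distinguished T hT
  rw [← Preadditive.IsIso.comp_right_eq_zero _ ((F.commShiftIso (1 : ℤ)).hom.app T.obj₁)]
  exact ⟨fun _ => Triangle.mor₃_eq_zero_of_mono₁ _ hFT (inferInstanceAs (Mono (F.map T.mor₁))),
    fun h => have := Triangle.mono₁ _ hFT h; isSplitMono_of_mono (F.mapTriangle.obj T).mor₁⟩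

lemma condSM_comp_of_full_of_faithful {𝒞 : Type*} [Category 𝒞]
    [HasZeroObject 𝒞] [Preadditive 𝒞] [HasShift 𝒞 ℤ]
    [∀ n : ℤ, (shiftFunctor 𝒞 n).Additive] [Pretriangulated 𝒞]
    (F₁ : 𝒜 ⥤ 𝒞) (F₂ : 𝒞 ⥤ ℬ) [F₁.CommShift ℤ] [F₁.IsTriangulated] [F₁.Full]
    [F₂.CommShift ℤ] [F₂.IsTriangulated] [F₂.PreservesZeroMorphisms] [F₂.Faithful] :
    CondSM (F₁ ⋙ F₂) := by
  intro X Y u hu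
  obtain ⟨Z, v, w, hT⟩ := distinguished_cocone_triangle u
  have hw : F₂.map (F₁.map w) = 0 := ((F₁ ⋙ F₂).isSplitMono_map_mor₁_iff hT).1 hu
  have : IsSplitMono (F₁.map u) := (F₁.isSplitMono_map_mor₁_iff hT).2 (F₂.map_eq_zero_iff.1 hw)
  obtain ⟨u', hu'⟩ := F₁.map_surjective (retraction (F₁.map u))
  exact ⟨u', by simp [hu']⟩

lemma kerW_iff_isIso {X Y : 𝒜} (f : X ⟶ Y) : kerW F f ↔ IsIso (F.map f) := by
  constructor
  · rintro ⟨Z, g, h, hT, hZ⟩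
    exact (Triangle.isZero₃_iff_isIso₁ _ (F.map_distinguished _ hT)).1 hZ
  · intro hf
    obtain ⟨Z, g, h, hT⟩ := distinguished_cocone_triangle f
    exact ⟨Z, g, h, hT, (Triangle.isZero₃_iff_isIso₁ _ (F.map_distinguished _ hT)).2 hf⟩

lemma kerW_eq_inverseImage : kerW F = (MorphismProperty.isomorphisms ℬ).inverseImage F := by
  ext X Y f
  exact kerW_iff_isIso F f

lemma kerW_isInvertedBy : (kerW F).IsInvertedBy F :=
  fun _ _ f hf => (kerW_iff_isIso F f).1 hf

lemma isZero_map_obj₁_iff {T : Triangle 𝒜} (hT : T ∈ distTriang 𝒜) :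
    IsZero (F.obj T.obj₁) ↔ IsIso (F.map T.mor₂) :=
  Triangle.isZero₁_iff_isIso₂ _ (F.map_distinguished T hT)

lemma exists_factor_through_ker_of_comp_eq_zero {X Y Y' : 𝒜} {f : X ⟶ Y} {s : Y ⟶ Y'}
    (hs : IsIso (F.map s)) (hfs : f ≫ s = 0) :
    ∃ (K : 𝒜) (g : X ⟶ K) (h : K ⟶ Y), IsZero (F.obj K) ∧ g ≫ h = f := by
  obtain ⟨K, h, k, hT⟩ := distinguished_cocone_triangle₁ s
  obtain ⟨g, rfl⟩ := Triangle.coyoneda_exact₂ _ hT f hfs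
  exact ⟨K, g, h, (isZero_map_obj₁_iff F hT).2 hs, rfl⟩

lemma exists_isIso_map_comp_eq_zero {K Y : 𝒜} (hK : IsZero (F.obj K)) (q : K ⟶ Y) :
    ∃ (Y' : 𝒜) (t : Y ⟶ Y'), IsIso (F.map t) ∧ q ≫ t = 0 := by
  obtain ⟨Y', t, e, hT⟩ := distinguished_cocone_triangle q
  exact ⟨Y', t, (isZero_map_obj₁_iff F hT).1 hK, comp_distTriang_mor_zero₁₂ _ hT⟩

instance : (kerW F).IsMultiplicative := by
  rw [kerW_eq_inverseImage]
  infer_instance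

instance : (kerW F).IsCompatibleWithShift ℤ where
  condition a := by
    ext X Y f
    rw [MorphismProperty.inverseImage_iff, kerW_iff_isIso, kerW_iff_isIso,
      ← Functor.comp_map, NatIso.isIso_map_iff (F.commShiftIso a), Functor.comp_map,
      isIso_iff_of_reflects_iso]

instance : (kerW F).IsCompatibleWithTriangulation where
  compatible_with_triangulation T₁ T₂ hT₁ hT₂ a b ha hb comm := by
    obtain ⟨c, hc₁, hc₂⟩ := complete_distinguished_triangle_morphism T₁ T₂ hT₁ hT₂ a b comm
    refine ⟨c, (kerW_iff_isIso F c).2 ?_, hc₁, hc₂⟩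
    exact isIso₃_of_isIso₁₂ (F.mapTriangle.map (Triangle.homMk T₁ T₂ a b c comm hc₁ hc₂))
      (F.map_distinguished _ hT₁) (F.map_distinguished _ hT₂)
      ((kerW_iff_isIso F a).1 ha) ((kerW_iff_isIso F b).1 hb)

instance : (kerW F).HasLeftCalculusOfFractions where
  exists_leftFraction X Y φ := by
    obtain ⟨K, k, h, hT⟩ := distinguished_cocone_triangle₁ φ.s
    obtain ⟨Y', t, e, hT'⟩ := distinguished_cocone_triangle (k ≫ φ.f)
    have hK : IsZero (F.obj K) := (isZero_map_obj₁_iff F hT).2 ((kerW_iff_isIso F _).1 φ.hs)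
    obtain ⟨c, hc, -⟩ := complete_distinguished_triangle_morphism _ _ hT hT' (𝟙 K) φ.f
      (Category.id_comp _).symm
    exact ⟨⟨c, t, (kerW_iff_isIso F t).2 ((isZero_map_obj₁_iff F hT').1 hK)⟩, hc.symm⟩
  ext X' X Y f₁ f₂ s hs hf := by
    obtain ⟨K, k, h, hT, hK⟩ := hs
    obtain ⟨q, hq⟩ : ∃ q : K ⟶ Y, f₁ - f₂ = k ≫ q := Triangle.yoneda_exact₂ _ hT (f₁ - f₂)
      (show s ≫ (f₁ - f₂) = 0 by rw [Preadditive.comp_sub, hf, sub_self])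
    obtain ⟨Y', t, ht, hqt⟩ := exists_isIso_map_comp_eq_zero F hK q
    refine ⟨Y', t, (kerW_iff_isIso F t).2 ht, ?_⟩
    rw [← sub_eq_zero, ← Preadditive.sub_comp, hq, Category.assoc, hqt, Limits.comp_zero]

variable {F}

lemma CondSM.objective (h : CondSM F) : ObjectiveFunctor F := by
  intro X Y f hf
  obtain ⟨Z, g, k, hT⟩ := distinguished_cocone_triangle f
  have : Mono (F.map g) := (Triangle.mor₁_eq_zero_iff_mono₂ _ (F.map_distinguished _ hT)).1 hf
  obtain ⟨g', hg'⟩ := h g (isSplitMono_of_mono _)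
  refine exists_factor_through_ker_of_comp_eq_zero F (s := g ≫ g')
    (by rw [hg']; infer_instance) ?_
  have hfg : f ≫ g = 0 := comp_distTriang_mor_zero₁₂ _ hT
  rw [← Category.assoc, hfg, Limits.zero_comp]

lemma condSM_of_objective_of_condI (hobj : ObjectiveFunctor F) (hI : CondI F) : CondSM F := by
  intro X Y u hu
  obtain ⟨Z, v, w, hT⟩ := distinguished_cocone_triangle u
  obtain ⟨K, α, β, hK, hαβ⟩ := hobj w ((F.isSplitMono_map_mor₁_iff hT).1 hu)
  obtain ⟨M, j, k, hT'⟩ := distinguished_cocone_triangle₂ β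
  obtain ⟨b, hb, -⟩ : ∃ b : Y ⟶ M, u ≫ b = 𝟙 X ≫ j ∧ v ≫ α = b ≫ k :=
    complete_distinguished_triangle_morphism₂ _ _ hT hT' (𝟙 X) α
      (show w ≫ (𝟙 X)⟦1⟧' = α ≫ β by rw [CategoryTheory.Functor.map_id, Category.comp_id, hαβ])
  have : IsIso (F.map j) := (Triangle.isZero₃_iff_isIso₁ _ (F.map_distinguished _ hT')).1 hK
  obtain ⟨j', hj'⟩ := hI j this
  refine ⟨b ≫ j', ?_⟩
  rw [reassoc_of% hb, F.map_comp, hj', IsIso.hom_inv_id]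

lemma map_eq_map_of_objective [F.Additive] (hobj : ObjectiveFunctor F) {𝒞 : Type*}
    [Category 𝒞] (G : 𝒜 ⥤ 𝒞) (hG : (kerW F).IsInvertedBy G) {X Y : 𝒜} {f g : X ⟶ Y}
    (h : F.map f = F.map g) : G.map f = G.map g := by
  obtain ⟨K, p, q, hK, hpq⟩ := hobj (f - g) (by rw [F.map_sub, h, sub_self])
  obtain ⟨Y', t, ht, hqt⟩ := exists_isIso_map_comp_eq_zero F hK q
  have : IsIso (G.map t) := hG t ((kerW_iff_isIso F t).2 ht)
  have hft : f ≫ t = g ≫ t := by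
    rw [← sub_eq_zero, ← Preadditive.sub_comp, ← hpq, Category.assoc, hqt, Limits.comp_zero]
  rw [← cancel_mono (G.map t), ← G.map_comp, ← G.map_comp, hft]

section Localization

variable {𝒟 : Type*} [Category 𝒟] (L : 𝒜 ⥤ 𝒟) [L.IsLocalization (kerW F)]
include L

lemma map_eq_map_of_isLocalization {X Y : 𝒜} {f g : X ⟶ Y} (h : L.map f = L.map g) :
    F.map f = F.map g := by
  let e := Localization.fac F (kerW_isInvertedBy F) L
  rw [← NatIso.naturality_1 e f, ← NatIso.naturality_1 e g, Functor.comp_map,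
    Functor.comp_map, h]

lemma objective_of_isLocalization
    (hL : ∀ ⦃X Y : 𝒜⦄ (f : X ⟶ Y), F.map f = 0 → L.map f = L.map 0) :
    ObjectiveFunctor F := by
  intro X Y f hf
  obtain ⟨Z, s, hs, hfs⟩ := (MorphismProperty.map_eq_iff_postcomp L (kerW F) f 0).1 (hL f hf)
  rw [Limits.zero_comp] at hfs
  exact exists_factor_through_ker_of_comp_eq_zero F ((kerW_iff_isIso F s).1 hs) hfs

lemma condI_of_full [L.Full] : CondI F := by
  intro X Y u hu
  have : IsIso (L.map u) := Localization.inverts L (kerW F) u ((kerW_iff_isIso F u).2 hu)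
  obtain ⟨u', hu'⟩ := L.map_surjective (inv (L.map u))
  refine ⟨u', IsIso.eq_inv_of_hom_inv_id ?_⟩
  rw [← F.map_comp, ← F.map_id]
  exact map_eq_map_of_isLocalization L (by rw [L.map_comp, hu', IsIso.hom_inv_id, L.map_id])

end Localization

variable [F.Additive]

def strictUniversalPropertyFixedTargetKerQuotient (hobj : ObjectiveFunctor F) (hI : CondI F)
    (𝒞 : Type*) [Category 𝒞] :
    Localization.StrictUniversalPropertyFixedTarget (Quotient.functor (kerHomRel F)) (kerW F) 𝒞
    where
  inverts X Y s hs := by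
    obtain ⟨t, ht⟩ := hI s ((kerW_iff_isIso F s).1 hs)
    have := (kerW_iff_isIso F s).1 hs
    refine ⟨(Quotient.functor _).map t, ?_, ?_⟩ <;>
      rw [← Functor.map_comp, ← CategoryTheory.Functor.map_id] <;>
      exact CategoryTheory.Quotient.sound _ (show F.map _ = F.map _ by simp [ht])
  lift G hG := CategoryTheory.Quotient.lift _ G fun _ _ _ _ h => map_eq_map_of_objective hobj G hG h
  fac _ _ := CategoryTheory.Quotient.lift_spec _ _ _
  uniq _ _ h := CategoryTheory.Quotient.lift_unique' _ _ _ h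

lemma isLocalization_kerQuotient_iff :
    (Quotient.functor (kerHomRel F)).IsLocalization (kerW F) ↔ CondSM F := by
  constructor
  · intro _
    refine condSM_of_objective_of_condI (objective_of_isLocalization
      (Quotient.functor (kerHomRel F)) fun _ _ f hf => ?_)
      (condI_of_full (Quotient.functor (kerHomRel F)))
    exact CategoryTheory.Quotient.sound _ (show F.map f = F.map 0 by rw [hf, F.map_zero])
  · intro h
    exact Functor.IsLocalization.mk' _ _
      (strictUniversalPropertyFixedTargetKerQuotient h.objective h.condI _)
      (strictUniversalPropertyFixedTargetKerQuotient h.objective h.condI _)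

lemma CondSM.exists_full_faithful_factorization (h : CondSM F) :
    ∃ (𝒞 : Type u) (_ : Category.{v} 𝒞) (_ : HasZeroObject 𝒞) (_ : Preadditive 𝒞)
      (_ : HasShift 𝒞 ℤ) (_ : ∀ n : ℤ, (shiftFunctor 𝒞 n).Additive)
      (_ : Pretriangulated 𝒞)
      (F₁ : 𝒜 ⥤ 𝒞) (F₂ : 𝒞 ⥤ ℬ)
      (_ : F₁.Additive) (_ : F₁.CommShift ℤ) (_ : F₁.IsTriangulated)
      (_ : F₂.Additive) (_ : F₂.CommShift ℤ) (_ : F₂.IsTriangulated),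
      F₁.Full ∧ F₁.EssSurj ∧ F₂.Faithful ∧ F₁ ⋙ F₂ = F := by
  let Q := Quotient.functor (kerHomRel F)
  have := isLocalization_kerQuotient_iff.2 h
  let := Triangulated.Localization.pretriangulated Q (kerW F)
  have := Triangulated.Localization.isTriangulated_functor Q (kerW F)
  have := Localization.essSurj_mapArrow Q (kerW F)
  have := CategoryTheory.Quotient.liftCommShift_compatibility F (kerHomRel F) ℤ fun _ _ _ _ h => h
  have : (kerQuotientLift F).IsTriangulated :=
    Functor.isTriangulated_of_precomp_iso (CategoryTheory.Quotient.lift.isLift (kerHomRel F) F _)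
  exact ⟨_, inferInstance, inferInstance, inferInstance, inferInstance, inferInstance,
    inferInstance, Q, kerQuotientLift F, inferInstance, inferInstance, inferInstance,
    inferInstance, inferInstance, inferInstance, inferInstance, inferInstance, inferInstance,
    CategoryTheory.Quotient.lift_spec _ _ _⟩

variable {𝒟 : Type*} [Category 𝒟] (V : 𝒜 ⥤ 𝒟) [V.IsLocalization (kerW F)]

lemma condSM_iff_objective_and_full : CondSM F ↔ ObjectiveFunctor F ∧ V.Full := by
  constructor
  · intro h
    have := isLocalization_kerQuotient_iff.2 h
    exact ⟨h.objective, Functor.Full.of_iso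
      (Localization.compUniqFunctor (Quotient.functor (kerHomRel F)) V (kerW F))⟩
  · rintro ⟨hobj, _⟩
    exact condSM_of_objective_of_condI hobj (condI_of_full V)

lemma condSM_iff_exists_equivalence : CondSM F ↔
    ∃ Φ : Quotient (kerHomRel F) ⥤ 𝒟, Φ.IsEquivalence ∧ Quotient.functor (kerHomRel F) ⋙ Φ = V := by
  rw [← isLocalization_kerQuotient_iff]
  constructor
  · intro hL
    let Φ := CategoryTheory.Quotient.lift (kerHomRel F) V fun _ _ _ _ h =>
      map_eq_map_of_objective (isLocalization_kerQuotient_iff.1 hL).objective V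
        (Localization.inverts V (kerW F)) h
    have hΦ : Quotient.functor (kerHomRel F) ⋙ Φ = V := CategoryTheory.Quotient.lift_spec _ _ _
    refine ⟨Φ, ?_, hΦ⟩
    exact Functor.isEquivalence_of_iso (Quotient.natIsoLift _
      (Localization.compUniqFunctor _ V (kerW F) ≪≫ eqToIso hΦ.symm))
  · rintro ⟨Φ, _, hΦ⟩
    exact Functor.IsLocalization.of_equivalence_target V (kerW F) _ Φ.asEquivalence.symm
      (eqToIso (by rw [← hΦ]) ≪≫ Functor.isoWhiskerLeft _ Φ.asEquivalence.unitIso.symm)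

end Triangulated

/-- Theorem [RZ2, 1.3]. For a triangle functor `F : 𝒜 → ℬ` with
Verdier quotient functor `V : 𝒜 → 𝒜/Ker F`, the following are equivalent:
(1) `F` satisfies (SM); (2) `F` is objective and `V` is full; (3) there is an
equivalence `Φ : 𝒜/ker(F) → 𝒜/Ker(F)` with `V = Φ ∘ π_F`; (4) `F = F₂ ∘ F₁` with `F₁`
a full and dense triangle functor and `F₂` a faithful triangle functor. -/
theorem stmt13
    {𝒜 : Type u} [Category.{v} 𝒜] [HasZeroObject 𝒜] [Preadditive 𝒜] [HasShift 𝒜 ℤ]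
    [∀ n : ℤ, (CategoryTheory.shiftFunctor 𝒜 n).Additive] [Pretriangulated 𝒜]
    {ℬ : Type u'} [Category.{v'} ℬ] [HasZeroObject ℬ] [Preadditive ℬ] [HasShift ℬ ℤ]
    [∀ n : ℤ, (CategoryTheory.shiftFunctor ℬ n).Additive] [Pretriangulated ℬ]
    (F : 𝒜 ⥤ ℬ) [F.Additive] [F.CommShift ℤ] [F.IsTriangulated]
    {𝒟 : Type u''} [Category.{v''} 𝒟]
    (V : 𝒜 ⥤ 𝒟) [V.IsLocalization (kerW F)] :
    List.TFAE [
      -- (1)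
      CondSM F,
      -- (2)
      ObjectiveFunctor F ∧ V.Full,
      -- (3)
      ∃ Φ : CategoryTheory.Quotient (kerHomRel F) ⥤ 𝒟,
        Φ.IsEquivalence ∧ CategoryTheory.Quotient.functor (kerHomRel F) ⋙ Φ = V,
      -- (4)
      ∃ (𝒞 : Type u) (_ : Category.{v} 𝒞) (_ : HasZeroObject 𝒞) (_ : Preadditive 𝒞)
        (_ : HasShift 𝒞 ℤ) (_ : ∀ n : ℤ, (CategoryTheory.shiftFunctor 𝒞 n).Additive)
        (_ : Pretriangulated 𝒞)
        (F₁ : 𝒜 ⥤ 𝒞) (F₂ : 𝒞 ⥤ ℬ)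
        (_ : F₁.Additive) (_ : F₁.CommShift ℤ) (_ : F₁.IsTriangulated)
        (_ : F₂.Additive) (_ : F₂.CommShift ℤ) (_ : F₂.IsTriangulated),
        F₁.Full ∧ F₁.EssSurj ∧ F₂.Faithful ∧ F₁ ⋙ F₂ = F
    ] := by
  tfae_have 1 ↔ 2 := condSM_iff_objective_and_full V
  tfae_have 1 ↔ 3 := condSM_iff_exists_equivalence V
  tfae_have 1 → 4 := CondSM.exists_full_faithful_factorization
  tfae_have 4 → 1 := by
    rintro ⟨𝒞, _, _, _, _, _, _, F₁, F₂, _, _, _, _, _, _, _, -, _, rfl⟩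
    exact condSM_comp_of_full_of_faithful F₁ F₂
  tfae_finish
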